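/- Let V : ℝ^3 → Matrix (Fin N) (Fin N) ℂ be twice continuously differentiable with V(θ) unitary for every θ, and define ñ_j(θ) = −i V(θ)† ∂_j V(θ) for j = 1,2,3. Then pointwise on ℝ^3: 2 · tr(ñ_1 ∂_2 ñ_3) = ∂_3 tr(ñ_1 ñ_2) − ∂_1 tr(ñ_2 ñ_3) + ∂_2 tr(ñ_3 ñ_1) − i · tr(ñ_1 (ñ_2 ñ_3 − ñ_3 ñ_2)). (This expresses the coordinate form tr(ñ_1 ∂_2 ñ_3) of the winding number density as the standard Levi-Civita density up to total derivatives.) -/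

import Mathlib

open Matrix
open scoped Matrix.Norms.L2Operator

/-- Partial derivative in the `j`-th coordinate of a matrix-valued function on `ℝ^m`. -/
noncomputable def matPderiv {N m : ℕ} (j : Fin m)
    (V : (Fin m → ℝ) → Matrix (Fin N) (Fin N) ℂ) (θ : Fin m → ℝ) :
    Matrix (Fin N) (Fin N) ℂ :=
  deriv (fun s => V (Function.update θ j s)) (θ j)

/-- Partial derivative in the `j`-th coordinate of a scalar function on `ℝ^m`. -/
noncomputable def scalPderiv {m : ℕ} (j : Fin m) (f : (Fin m → ℝ) → ℂ) (θ : Fin m → ℝ) : ℂ :=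
  deriv (fun s => f (Function.update θ j s)) (θ j)

/-- The connection-like matrix `ñ_j(θ) = −i V(θ)† ∂_j V(θ)`. -/
noncomputable def ntilde {N m : ℕ} (V : (Fin m → ℝ) → Matrix (Fin N) (Fin N) ℂ)
    (j : Fin m) (θ : Fin m → ℝ) : Matrix (Fin N) (Fin N) ℂ :=
  (-Complex.I) • ((V θ)ᴴ * matPderiv j V θ)

/-!
Write `A_j = V⋆ ∂_j V`, so that `ñ_j = -i A_j`. Differentiating `V⋆ V = 1` gives
`∂_j V⋆ = -A_j V⋆`, and together with the symmetry of second derivatives this yields the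
Maurer–Cartan equation `∂_a A_b - ∂_b A_a = A_b A_a - A_a A_b`, i.e.
`∂_a ñ_b = ∂_b ñ_a - i [ñ_a, ñ_b]`. Expanding the three total derivatives by the product rule
and using this to bring every derivative to the form `∂₂ñ₃`, `∂₁ñ₃` or `∂₂ñ₁`, all remaining
terms cancel by cyclicity of the trace.
-/

theorem deriv_update_eq_fderiv {𝕜 ι F : Type*} [NontriviallyNormedField 𝕜] [Fintype ι]
    [DecidableEq ι] [NormedAddCommGroup F] [NormedSpace 𝕜 F] {f : (ι → 𝕜) → F} {θ : ι → 𝕜}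
    (hf : DifferentiableAt 𝕜 f θ) (j : ι) :
    deriv (fun s => f (Function.update θ j s)) (θ j) = fderiv 𝕜 f θ (Pi.single j 1) := by
  rw [← Function.update_eq_self j θ] at hf
  simpa [Function.comp_def] using
    (hf.hasFDerivAt.comp_hasDerivAt (θ j) (hasDerivAt_update θ j (θ j))).deriv

theorem scalPderiv_trace_mul {N m : ℕ} {M₁ M₂ : (Fin m → ℝ) → Matrix (Fin N) (Fin N) ℂ}
    {θ : Fin m → ℝ} (h₁ : DifferentiableAt ℝ M₁ θ) (h₂ : DifferentiableAt ℝ M₂ θ) (k : Fin m) :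
    scalPderiv k (fun θ => trace (M₁ θ * M₂ θ)) θ
      = trace (matPderiv k M₁ θ * M₂ θ) + trace (M₁ θ * matPderiv k M₂ θ) := by
  let tr : Matrix (Fin N) (Fin N) ℂ →L[ℝ] ℂ := (traceLinearMap (Fin N) ℝ ℂ).toContinuousLinearMap
  have h : HasFDerivAt (fun θ => trace (M₁ θ * M₂ θ)) _ θ :=
    tr.hasFDerivAt.comp θ (h₁.hasFDerivAt.mul' h₂.hasFDerivAt)
  rw [scalPderiv, matPderiv, matPderiv, deriv_update_eq_fderiv h.differentiableAt,
    deriv_update_eq_fderiv h₁, deriv_update_eq_fderiv h₂, h.fderiv]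
  simp [tr, add_comm]

section MaurerCartan

variable {E A : Type*} [NormedAddCommGroup E] [NormedSpace ℝ E] [NormedRing A]
  [NormedAlgebra ℝ A] [StarRing A] [StarModule ℝ A] [ContinuousStar A] {V : E → A} {x : E}

noncomputable def maurerCartanForm (V : E → A) (x u : E) : A :=
  star (V x) * fderiv ℝ V x u

theorem star_fderiv_eq_neg_maurerCartanForm_mul_star (hunit : ∀ x, V x ∈ unitary A)
    (hV : DifferentiableAt ℝ V x) (u : E) :
    star (fderiv ℝ V x u) = -(maurerCartanForm V x u * star (V x)) := by
  have hconst : (fun x => star (V x) * V x) = fun _ => 1 :=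
    funext fun x => Unitary.star_mul_self_of_mem (hunit x)
  have hsum : star (V x) * fderiv ℝ V x u + star (fderiv ℝ V x u) * V x = 0 := by
    simpa [fderiv_fun_mul' hV.star hV] using congrArg (fun f => fderiv ℝ f x u) hconst
  calc star (fderiv ℝ V x u) = star (fderiv ℝ V x u) * V x * star (V x) := by
        rw [mul_assoc, Unitary.mul_star_self_of_mem (hunit x), mul_one]
    _ = -(maurerCartanForm V x u * star (V x)) := by
        rw [eq_neg_of_add_eq_zero_right hsum, maurerCartanForm, neg_mul]

theorem star_fderiv_mul_fderiv (hunit : ∀ x, V x ∈ unitary A) (hV : DifferentiableAt ℝ V x)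
    (u v : E) :
    star (fderiv ℝ V x v) * fderiv ℝ V x u
      = -(maurerCartanForm V x v * maurerCartanForm V x u) := by
  rw [star_fderiv_eq_neg_maurerCartanForm_mul_star hunit hV, neg_mul, mul_assoc]
  rfl

theorem differentiableAt_maurerCartanForm (hV : DifferentiableAt ℝ V x)
    (hV' : DifferentiableAt ℝ (fderiv ℝ V) x) (u : E) :
    DifferentiableAt ℝ (maurerCartanForm V · u) x :=
  hV.star.mul (hV'.clm_apply (differentiableAt_const u))

theorem fderiv_maurerCartanForm_apply (hV : DifferentiableAt ℝ V x)
    (hV' : DifferentiableAt ℝ (fderiv ℝ V) x) (u v : E) :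
    fderiv ℝ (maurerCartanForm V · u) x v
      = star (fderiv ℝ V x v) * fderiv ℝ V x u + star (V x) * fderiv ℝ (fderiv ℝ V) x v u := by
  have h : HasFDerivAt (maurerCartanForm V · u) _ x :=
    hV.hasFDerivAt.star.mul' (hV'.hasFDerivAt.clm_apply (hasFDerivAt_const u x))
  rw [h.fderiv]
  simp [add_comm]

theorem maurerCartan_equation (hunit : ∀ x, V x ∈ unitary A) (hV : ContDiffAt ℝ 2 V x)
    (u v : E) :
    fderiv ℝ (maurerCartanForm V · u) x v - fderiv ℝ (maurerCartanForm V · v) x u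
      = maurerCartanForm V x u * maurerCartanForm V x v
        - maurerCartanForm V x v * maurerCartanForm V x u := by
  have hV₁ : DifferentiableAt ℝ V x := hV.differentiableAt two_ne_zero
  have hV₂ : DifferentiableAt ℝ (fderiv ℝ V) x :=
    (hV.fderiv_right one_add_one_eq_two.le).differentiableAt one_ne_zero
  rw [fderiv_maurerCartanForm_apply hV₁ hV₂, fderiv_maurerCartanForm_apply hV₁ hV₂,
    star_fderiv_mul_fderiv hunit hV₁, star_fderiv_mul_fderiv hunit hV₁,
    (hV.isSymmSndFDerivAt (by simp)).eq v u]
  abel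

end MaurerCartan

section Ntilde

variable {N m : ℕ} {V : (Fin m → ℝ) → Matrix (Fin N) (Fin N) ℂ}

theorem ntilde_eq_smul_maurerCartanForm (hV : Differentiable ℝ V) (j : Fin m) :
    ntilde V j = fun θ => -Complex.I • maurerCartanForm V θ (Pi.single j 1) := by
  funext θ
  rw [ntilde, matPderiv, deriv_update_eq_fderiv (hV θ)]
  rfl

theorem differentiableAt_maurerCartanForm_single (hV : ContDiff ℝ 2 V) (j : Fin m)
    (θ : Fin m → ℝ) :
    DifferentiableAt ℝ (maurerCartanForm V · (Pi.single j 1)) θ :=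
  differentiableAt_maurerCartanForm (hV.differentiable two_ne_zero θ)
    ((hV.fderiv_right one_add_one_eq_two.le).differentiable one_ne_zero θ) _

theorem differentiable_ntilde (hV : ContDiff ℝ 2 V) (j : Fin m) :
    Differentiable ℝ (ntilde V j) := by
  rw [ntilde_eq_smul_maurerCartanForm (hV.differentiable two_ne_zero)]
  exact fun θ => (differentiableAt_maurerCartanForm_single hV j θ).fun_const_smul _

theorem matPderiv_ntilde_swap (hV : ContDiff ℝ 2 V) (hunit : ∀ θ, (V θ)ᴴ * V θ = 1)
    (a b : Fin m) (θ : Fin m → ℝ) :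
    matPderiv a (ntilde V b) θ
      = matPderiv b (ntilde V a) θ
        - Complex.I • (ntilde V a θ * ntilde V b θ - ntilde V b θ * ntilde V a θ) := by
  have hflat := maurerCartan_equation (fun θ => Matrix.mem_unitaryGroup_iff'.mpr (hunit θ))
    hV.contDiffAt (Pi.single b 1) (Pi.single a 1) (x := θ)
  rw [matPderiv, matPderiv, deriv_update_eq_fderiv (differentiable_ntilde hV b θ),
    deriv_update_eq_fderiv (differentiable_ntilde hV a θ),
    ntilde_eq_smul_maurerCartanForm (hV.differentiable two_ne_zero) a,
    ntilde_eq_smul_maurerCartanForm (hV.differentiable two_ne_zero) b,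
    fderiv_fun_const_smul (differentiableAt_maurerCartanForm_single hV b θ),
    fderiv_fun_const_smul (differentiableAt_maurerCartanForm_single hV a θ)]
  simp only [FunLike.coe_smul, Pi.smul_apply, smul_mul_smul, neg_mul_neg, Complex.I_mul_I]
  rw [eq_add_of_sub_eq hflat]
  module

end Ntilde

/-- For a twice continuously differentiable unitary-valued map `V` on `ℝ³`, with
`ñ_j = −i V†∂_j V` (indices `1,2,3` realized as `0,1,2 : Fin 3`), pointwise:
`2 tr(ñ₁ ∂₂ ñ₃) = ∂₃ tr(ñ₁ ñ₂) − ∂₁ tr(ñ₂ ñ₃) + ∂₂ tr(ñ₃ ñ₁) − i tr(ñ₁ [ñ₂, ñ₃])`.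
This expresses the coordinate form of the winding-number density as the standard
Levi-Civita density up to total derivatives. -/
theorem two_trace_ntilde_pderiv_identity {N : ℕ}
    (V : (Fin 3 → ℝ) → Matrix (Fin N) (Fin N) ℂ)
    (hV : ContDiff ℝ 2 V)
    (hunit : ∀ θ, (V θ)ᴴ * V θ = 1) :
    ∀ θ : Fin 3 → ℝ,
      2 * Matrix.trace (ntilde V 0 θ * matPderiv 1 (ntilde V 2) θ)
        = scalPderiv 2 (fun θ' => Matrix.trace (ntilde V 0 θ' * ntilde V 1 θ')) θ
          - scalPderiv 0 (fun θ' => Matrix.trace (ntilde V 1 θ' * ntilde V 2 θ')) θ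
          + scalPderiv 1 (fun θ' => Matrix.trace (ntilde V 2 θ' * ntilde V 0 θ')) θ
          - Complex.I * Matrix.trace
              (ntilde V 0 θ * (ntilde V 1 θ * ntilde V 2 θ - ntilde V 2 θ * ntilde V 1 θ)) := by
  intro θ
  have hn := differentiable_ntilde hV
  rw [scalPderiv_trace_mul (hn 0 θ) (hn 1 θ), scalPderiv_trace_mul (hn 1 θ) (hn 2 θ),
    scalPderiv_trace_mul (hn 2 θ) (hn 0 θ), matPderiv_ntilde_swap hV hunit 2 0,
    matPderiv_ntilde_swap hV hunit 2 1, matPderiv_ntilde_swap hV hunit 0 1]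
  generalize ntilde V 0 θ = a, ntilde V 1 θ = b, ntilde V 2 θ = c,
    matPderiv 1 (ntilde V 2) θ = p, matPderiv 0 (ntilde V 2) θ = q, matPderiv 1 (ntilde V 0) θ = r
  simp only [Matrix.sub_mul, Matrix.mul_sub, Matrix.smul_mul, Matrix.mul_smul, trace_sub,
    trace_smul, smul_eq_mul, Matrix.mul_assoc]
  rw [trace_mul_comm p, trace_mul_comm b q, trace_mul_comm c r, trace_mul_comm c (a * b),
    trace_mul_comm b (a * c)]
  simp only [Matrix.mul_assoc]
  ring
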